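/- (Framing move, k = d = 2.) Fix ℓ ≥ 2 and a box B = x + [ℓ]². Let M be the set of configurations η such that B is (2,2)-good for η (every row and every column of B contains at least two empty sites, and B contains at least one additional empty site) and in addition the bottom row of B is entirely empty. There exists a T-step move M with domain determined by M, whose transitions are contained in B, such that for every η ∈ M the final configuration M_T η has the left column of B entirely empty (and agrees with η outside B). Moreover, Loss(M) ≤ C ℓ log₂ ℓ and T ≤ C ℓ² for a universal constant C. -/

import Mathlib

open MeasureTheory ENNReal

noncomputable section

namespace KA

open scoped Classical

/-- Sites of the lattice `ℤ^d`. -/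
abbrev Site (d : ℕ) := Fin d → ℤ

/-- A configuration: `true` = occupied, `false` = empty. -/
abbrev Config (d : ℕ) := Site d → Bool

variable {d : ℕ}

def origin : Site d := fun _ => 0

def eVec (d : ℕ) (i : Fin d) : Site d := fun j => if j = i then 1 else 0

/-- Nearest neighbours in `ℤ^d`. -/
def adj (x y : Site d) : Prop := (∑ i, |x i - y i|) = 1

/-- The set of (at most `2d`) nearest neighbours of a site. -/
def neighbors (x : Site d) : Finset (Site d) :=
  Finset.image (fun p : Fin d × Bool =>
    Function.update x p.1 (x p.1 + if p.2 then 1 else -1)) Finset.univ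

/-- The Kob-Andersen kinetic constraint `c_{xy}` for parameter `k`:
`x` has at least `k-1` empty neighbours other than `y`, and vice versa. -/
def constraint (k : ℕ) (η : Config d) (x y : Site d) : Prop :=
  k - 1 ≤ ((neighbors x).filter fun z => z ≠ y ∧ η z = false).card ∧
  k - 1 ≤ ((neighbors y).filter fun z => z ≠ x ∧ η z = false).card

/-- `c_{xy}(η)` as a `{0,1}`-valued quantity. -/
def cval (k : ℕ) (η : Config d) (x y : Site d) : ℝ≥0∞ :=
  if constraint k η x y then 1 else 0

/-- `η^{xy}` : the configuration with the values at `x` and `y` exchanged. -/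
def swap (η : Config d) (x y : Site d) : Config d :=
  fun z => if z = x then η y else if z = y then η x else η z

/-- `(τ_y η)(z) = η (z - y)`. -/
def shift (y : Site d) (η : Config d) : Config d := fun z => η (z - y)

/-- A local function depends on finitely many coordinates. -/
def IsLocal (f : Config d → ℝ) : Prop :=
  ∃ S : Finset (Site d), ∀ η η' : Config d, (∀ x ∈ S, η x = η' x) → f η = f η'

def dotZ (u : Fin d → ℝ) (y : Site d) : ℝ := ∑ i, u i * (y i : ℝ)

/-- The environment part `Σ_{x ≠ 0} Σ_{y ∼ x} c_{xy} (f(η^{xy}) - f(η))²`. -/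
def envTerm (k : ℕ) (f : Config d → ℝ) (η : Config d) : ℝ≥0∞ :=
  ∑' p : Site d × Site d,
    if p.1 ≠ origin ∧ adj p.1 p.2 then
      cval k η p.1 p.2 * ENNReal.ofReal ((f (swap η p.1 p.2) - f η) ^ 2)
    else 0

/-- The tagged-particle part `Σ_{y ∼ 0} c_{0y} (u·y + f(τ_y η^{0y}) - f(η))²`. -/
def tagTerm (k : ℕ) (u : Fin d → ℝ) (f : Config d → ℝ) (η : Config d) : ℝ≥0∞ :=
  ∑' y : Site d,
    if adj origin y then
      cval k η origin y *
        ENNReal.ofReal ((dotZ u y + f (shift y (swap η origin y)) - f η) ^ 2)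
    else 0

/-- The variational (Dirichlet) functional `E_u(f)` integrated against `μ₀`. -/
def energy (k : ℕ) (u : Fin d → ℝ) (μ0 : Measure (Config d)) (f : Config d → ℝ) : ℝ≥0∞ :=
  ∫⁻ η, envTerm k f η + tagTerm k u f η ∂μ0

/-- `μ` is the Bernoulli product measure where each site is independently
occupied with probability `1 - q`. -/
def IsBernoulliProduct (q : ℝ) (μ : Measure (Config d)) : Prop :=
  IsProbabilityMeasure μ ∧
  ∀ (S : Finset (Site d)) (ζ : Site d → Bool),
    μ {η | ∀ x ∈ S, η x = ζ x} = ∏ x ∈ S, ENNReal.ofReal (if ζ x then 1 - q else q)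

/-- `μ₀ = μ(· | η(0) = 1)`. -/
def condOcc (μ : Measure (Config d)) : Measure (Config d) :=
  ProbabilityTheory.cond μ {η | η origin = true}

/-- The first standard basis vector of `ℝ^d`. -/
def e1R (d : ℕ) : Fin d → ℝ := fun i => if (i : ℕ) = 0 then 1 else 0

def basisR (d : ℕ) (i : Fin d) : Fin d → ℝ := fun j => if j = i then 1 else 0

/-- The quadratic form `u ↦ inf over local f of E_u(f)`. -/
def Qform (k : ℕ) (μ : Measure (Config d)) (u : Fin d → ℝ) : ℝ≥0∞ :=
  ⨅ f : {f : Config d → ℝ // IsLocal f}, energy k u (condOcc μ) f.1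

/-- The self-diffusion coefficient `D(q) = inf_f E_{e₁}(f)`. -/
def diffCoeff (k : ℕ) (μ : Measure (Config d)) : ℝ≥0∞ := Qform k μ (e1R d)

/-- `expIter n` is the `n`-fold iterated exponential. -/
def expIter : ℕ → ℝ → ℝ
  | 0, x => x
  | n + 1, x => Real.exp (expIter n x)

/-! ### Frameability, goodness, block-connectedness -/

/-- Fill every site outside `V` with a particle. -/
def fillOutside (V : Set (Site d)) (η : Config d) : Config d :=
  fun z => if z ∈ V then η z else true

/-- A single legal KA-`k`f transition inside `V`. -/
def KAStep (k : ℕ) (V : Set (Site d)) (η η' : Config d) : Prop :=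
  ∃ x y, adj x y ∧ x ∈ V ∧ y ∈ V ∧ η x ≠ η y ∧ constraint k η x y ∧ η' = swap η x y

/-- A generalized box with minimal corner `a`, spanning the directions in `E`,
with side length `m` (coordinates outside `E` are frozen at `a`). -/
def genBox (a : Site d) (E : Finset (Fin d)) (m : ℕ) : Set (Site d) :=
  {x | ∀ i, (i ∈ E → a i ≤ x i ∧ x i < a i + m) ∧ (i ∉ E → x i = a i)}

/-- The `k'`-th frame of the generalized box: the union of all of its
`(k'-1)`-dimensional slices passing through the minimal corner. -/
def genFrame (k' : ℕ) (a : Site d) (E : Finset (Fin d)) (m : ℕ) : Set (Site d) :=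
  {x | x ∈ genBox a E m ∧ (E.filter fun i => x i ≠ a i).card ≤ k' - 1}

/-- The generalized box is frameable for `η` : `η` (with the outside filled by
particles) is connected by legal KA-`k'`f transitions inside the box to a
configuration whose `k'`-th frame is empty. -/
def Frameable (k' : ℕ) (a : Site d) (E : Finset (Fin d)) (m : ℕ) (η : Config d) : Prop :=
  ∃ η', Relation.ReflTransGen (KAStep k' (genBox a E m)) (fillOutside (genBox a E m) η) η' ∧
    ∀ x ∈ genFrame k' a E m, η' x = false

def one (d : ℕ) : Site d := fun _ => 1

/-- minimal corner of the box `b + [m]^d`. -/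
def corner (b : Site d) : Site d := fun i => b i + 1

/-- All codimension-one slices of the generalized box are `(k'-1)`-frameable,
for every configuration differing from `η` in at most one site. -/
def SlicesOK (k' : ℕ) (a : Site d) (E : Finset (Fin d)) (m : ℕ) (η : Config d) : Prop :=
  ∀ η' : Config d, {x | η' x ≠ η x}.Subsingleton →
    ∀ i ∈ E, ∀ t : ℕ, t < m →
      Frameable (k' - 1) (Function.update a i (a i + t)) (E.erase i) m η'

/-- A good box: all codimension-one slices frameable (robustly to one spin flip),
with one extra empty site in addition to the ones required. -/
def GoodBox (k' : ℕ) (a : Site d) (E : Finset (Fin d)) (m : ℕ) (η : Config d) : Prop :=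
  SlicesOK k' a E m η ∧
  ∃ x₀ ∈ genBox a E m, η x₀ = false ∧ SlicesOK k' a E m (Function.update η x₀ true)

/-- The length scale `ℓ = ℓ(q)`. -/
def lscale (d k : ℕ) (c q : ℝ) : ℕ :=
  if k = 2 then ⌈c * Real.log (1 / q) * q ^ (-(1 : ℝ) / ((d : ℝ) - 1))⌉₊
  else ⌈c * expIter (k - 2) (q ^ (-(1 : ℝ) / ((d : ℝ) - (k : ℝ) + 1)))⌉₊

/-- The length scale `L = q^{-cℓ}`. -/
def Lscale (q c : ℝ) (ℓ : ℕ) : ℕ := ⌈q ^ (-(c * (ℓ : ℝ)))⌉₊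

/-- One step between adjacent boxes: the base point moves by `±ℓ e_i`. -/
def pathStep (ℓ : ℕ) (b b' : Site d) : Prop :=
  ∃ i : Fin d, ∃ s : Bool,
    b' = fun j => b j + if j = i then (if s then (ℓ : ℤ) else -(ℓ : ℤ)) else 0

/-- A `(d,k)`-super-good path of boxes of side `ℓ` inside the block `v + [L]^d`,
joining `v + [ℓ]^d` to `v + (L-ℓ)e_α + [ℓ]^d`, of length at most `3L`:
all boxes good and at least one frameable. -/
def SuperGoodPath (k ℓ L : ℕ) (v : Site d) (α : Fin d) (η : Config d) : Prop :=
  ∃ n : ℕ, n ≤ 3 * L ∧ ∃ b : ℕ → Site d,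
    b 0 = v ∧
    (b n = fun j => v j + if j = α then (L : ℤ) - (ℓ : ℤ) else 0) ∧
    (∀ m < n, pathStep ℓ (b m) (b (m + 1))) ∧
    (∀ m ≤ n, genBox (corner (b m)) Finset.univ ℓ ⊆ genBox (corner v) Finset.univ L) ∧
    (∀ m ≤ n, GoodBox k (corner (b m)) Finset.univ ℓ η) ∧
    (∃ m ≤ n, Frameable k (corner (b m)) Finset.univ ℓ η)

/-- minimal corner of the external face of the box `genBox a univ m` in
direction `j`, on the positive (`s = true`) or negative side. -/
def faceBase (a : Site d) (m : ℕ) (j : Fin d) (s : Bool) : Site d :=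
  Function.update a j (if s then a j + m else a j - 1)

/-- The face `F` is adjacent to the vertex `v`. -/
def FaceNear (v : Site d) (F : Set (Site d)) : Prop := ∃ x ∈ F, ∀ i, |x i - v i| ≤ 1

/-- All `(d-1)`-dimensional external faces of the box `genBox a univ m` that are
adjacent to the vertex `v` are `(d-1, k-1)`-good. -/
def GoodFacesAt (k : ℕ) (a : Site d) (m : ℕ) (v : Site d) (η : Config d) : Prop :=
  ∀ (j : Fin d) (s : Bool),
    FaceNear v (genBox (faceBase a m j s) (Finset.univ.erase j) m) →
    GoodBox (k - 1) (faceBase a m j s) (Finset.univ.erase j) m η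

/-- The coarse vertices `v` and `v + (L+1)e_α` are `(d,k)`-block-connected. -/
def BlockConnected (k ℓ L : ℕ) (v : Site d) (α : Fin d) (η : Config d) : Prop :=
  SuperGoodPath k ℓ L v α η ∧
  GoodFacesAt k (corner v) ℓ v η ∧
  GoodFacesAt k (corner (fun j => v j + if j = α then (L : ℤ) - (ℓ : ℤ) else 0)) (ℓ + 1)
    (fun j => v j + if j = α then (L : ℤ) + 1 else 0) η

/-! ### `T`-step moves -/

/-- A `T`-step move with domain determined by the set of configurations `M`,
whose transitions are legal KA-`k`f transitions contained in `V`,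
keeping track of the position of a marked particle. -/
structure TStepMove (d k : ℕ) (M : Set (Config d)) (V : Set (Site d)) (T : ℕ) where
  conf : Config d → ℕ → Config d
  pos : Config d → Site d → ℕ → Site d
  conf_zero : ∀ η ∈ M, conf η 0 = η
  pos_zero : ∀ η ∈ M, ∀ z : Site d, η z = true → pos η z 0 = z
  step : ∀ η ∈ M, ∀ z : Site d, η z = true → ∀ t < T,
    (conf η (t + 1) = conf η t ∧ pos η z (t + 1) = pos η z t) ∨
    ∃ x y, adj x y ∧ x ∈ V ∧ y ∈ V ∧ conf η t x = true ∧ conf η t y = false ∧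
      constraint k (conf η t) x y ∧ conf η (t + 1) = swap (conf η t) x y ∧
      pos η z (t + 1) = if pos η z t = x then y else pos η z t

/-- `Loss(M) ≤ K` : at every step, at most `2^K` configurations of the domain
have a common image. -/
def LossBoundedBy {d k : ℕ} {M : Set (Config d)} {V : Set (Site d)} {T : ℕ}
    (mv : TStepMove d k M V T) (K : ℝ) : Prop :=
  ∀ t < T, ∀ η' ∈ M, ∃ S : Finset (Config d),
    {η ∈ M | mv.conf η t = mv.conf η' t ∧ mv.conf η (t + 1) = mv.conf η' (t + 1)} ⊆ ↑S ∧
    (S.card : ℝ) ≤ (2 : ℝ) ^ K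

/-! ### Bond configurations on the coarse lattice -/

/-- A bond configuration on the coarse lattice: the edge `(i, α)` joins the
coarse vertices of index `i` and `i + e_α`. -/
abbrev BondConfig (d : ℕ) := (Site d × Fin d) → Bool

def IsLocalBond (g : BondConfig d → ℝ) : Prop :=
  ∃ S : Finset (Site d × Fin d), ∀ ω ω' : BondConfig d, (∀ e ∈ S, ω e = ω' e) → g ω = g ω'

/-- Translation of a bond configuration by a coarse index vector. -/
def bondShift (v : Site d) (ω : BondConfig d) : BondConfig d := fun e => (ω (e.1 - v, e.2))

/-- Two coarse indices joined by an open bond. -/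
def bondRel (ω : BondConfig d) (i j : Site d) : Prop :=
  (∃ α, j = i + eVec d α ∧ ω (i, α) = true) ∨ (∃ α, i = j + eVec d α ∧ ω (j, α) = true)

/-- The event `{0 ↔ ∞}`: the origin lies in an infinite open cluster. -/
def InfiniteCluster : Set (BondConfig d) :=
  {ω | {j : Site d | Relation.ReflTransGen (bondRel ω) origin j}.Infinite}

/-- The coarse index of the neighbour `± e_α` of the coarse origin. -/
def coarseIdx (d : ℕ) (α : Fin d) (s : Bool) : Site d :=
  if s then eVec d α else -(eVec d α)

/-- The actual lattice vector `±(L+1) e_α` of a coarse neighbour of the origin. -/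
def coarseVecZ (d L : ℕ) (α : Fin d) (s : Bool) : Site d :=
  fun j => ((L : ℤ) + 1) * coarseIdx d α s j

/-- Indicator of the bond between the coarse origin and its neighbour `± e_α`. -/
def edgeInd (ω : BondConfig d) (α : Fin d) (s : Bool) : ℝ≥0∞ :=
  if (if s then ω (origin, α) else ω (-(eVec d α), α)) = true then 1 else 0

/-- The auxiliary quadratic form `u ↦ u ⬝ D_aux u`. -/
def QauxForm (d L : ℕ) (μstar : Measure (BondConfig d)) (u : Fin d → ℝ) : ℝ≥0∞ :=
  ⨅ g : {g : BondConfig d → ℝ // IsLocalBond g},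
    ∑ α : Fin d, ∑ s : Bool,
      ∫⁻ ω, edgeInd ω α s *
        ENNReal.ofReal (((if s then (1 : ℝ) else -1) * ((L : ℝ) + 1) * u α +
          g.1 (bondShift (coarseIdx d α s) ω) - g.1 ω) ^ 2) ∂μstar

/-- Indicator (on microscopic configurations) that the coarse origin and its
neighbour `± e_α` are block-connected, for an abstract notion `BC`. -/
def microEdgeInd (BC : Site d → Fin d → Config d → Bool) (α : Fin d) (s : Bool)
    (η : Config d) : ℝ≥0∞ :=
  if (if s then BC origin α η else BC (-(eVec d α)) α η) = true then 1 else 0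

/-- The microscopic comparison form
`u ↦ inf_f Σ_{i ∼ 0} μ₀[ η̄_{0i} (u·i + f(τ_i η^{0,i}) - f(η))² ]`. -/
def microForm (d k L : ℕ) (BC : Site d → Fin d → Config d → Bool)
    (μ0 : Measure (Config d)) (u : Fin d → ℝ) : ℝ≥0∞ :=
  ⨅ f : {f : Config d → ℝ // IsLocal f},
    ∑ α : Fin d, ∑ s : Bool,
      ∫⁻ η, microEdgeInd BC α s η *
        ENNReal.ofReal (((if s then (1 : ℝ) else -1) * ((L : ℝ) + 1) * u α +
          f.1 (shift (coarseVecZ d L α s) (swap η origin (coarseVecZ d L α s))) - f.1 η) ^ 2)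
        ∂μ0

/-! ### d = 2 geometry -/

/-- The column `y + {c} × [ℓ]` in `ℤ²`. -/
def col2 (y : Site 2) (c : ℤ) (ℓ : ℕ) : Set (Site 2) :=
  {x | x 0 = y 0 + c ∧ y 1 + 1 ≤ x 1 ∧ x 1 ≤ y 1 + ℓ}

/-- The box `b + [ℓ]²`. -/
def box2 (b : Site 2) (ℓ : ℕ) : Set (Site 2) := genBox (corner b) Finset.univ ℓ

/-- `S` contains at least two empty sites. -/
def TwoEmptyIn (S : Set (Site 2)) (η : Config 2) : Prop :=
  ∃ a ∈ S, ∃ b ∈ S, a ≠ b ∧ η a = false ∧ η b = false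

/-- Every row and every column of the box `b + [ℓ]²` contains at least two
empty sites. -/
def RowsColsOK (b : Site 2) (ℓ : ℕ) (η : Config 2) : Prop :=
  (∀ t : ℕ, 1 ≤ t → t ≤ ℓ → TwoEmptyIn {z | z ∈ box2 b ℓ ∧ z 1 = b 1 + t} η) ∧
  (∀ t : ℕ, 1 ≤ t → t ≤ ℓ → TwoEmptyIn {z | z ∈ box2 b ℓ ∧ z 0 = b 0 + t} η)

/-- The box `b + [ℓ]²` is `(2,2)`-good: two empty sites in every row and
column, plus one additional empty site. -/
def Good22 (b : Site 2) (ℓ : ℕ) (η : Config 2) : Prop :=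
  RowsColsOK b ℓ η ∧
  ∃ w ∈ box2 b ℓ, η w = false ∧ RowsColsOK b ℓ (Function.update η w true)

/-! ### Bootstrap percolation -/

/-- The box `[-ℓ, ℓ]^d`. -/
def bigBox (d ℓ : ℕ) : Set (Site d) := {x | ∀ i, |x i| ≤ (ℓ : ℤ)}

/-- One step of `k`-neighbour bootstrap percolation on `[-ℓ,ℓ]^d` (sites
outside the box are left unchanged). -/
def BPstep (k ℓ : ℕ) (η : Config d) : Config d := fun x =>
  if x ∈ bigBox d ℓ then
    (if η x = true ∧
        ((neighbors x).filter fun z => z ∈ bigBox d ℓ ∧ η z = false).card < k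
      then true else false)
  else η x

/-- The limiting configuration of bootstrap percolation. -/
def BPinf (k ℓ : ℕ) (η : Config d) : Config d := fun x =>
  if ∀ t : ℕ, (BPstep k ℓ)^[t] η x = true then true else false

/-- One step along the bootstrap percolation cluster. -/
def bpRel (k ℓ : ℕ) (η : Config d) (a b : Site d) : Prop :=
  adj a b ∧ b ∈ bigBox d ℓ ∧ BPinf k ℓ η b = false

/-- The bootstrap percolation cluster of the origin. -/
def bpCluster (k ℓ : ℕ) (η : Config d) : Set (Site d) :=
  {x | Relation.ReflTransGen (bpRel k ℓ η) origin x}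

def coord0 (x : Site d) : ℤ := if h : 0 < d then x ⟨0, h⟩ else 0

/-- The first coordinate of the rightmost site of the bootstrap percolation
cluster of the origin. -/
def bpRightmost (k ℓ : ℕ) (η : Config d) : ℝ :=
  sSup ((fun x : Site d => (coord0 x : ℝ)) '' bpCluster k ℓ η)

/-- The test function `f`, computed on the restriction to `[-ℓ,ℓ]^d`. -/
def fTest (d k ℓ : ℕ) (η : Config d) : ℝ :=
  bpRightmost k ℓ (fillOutside (bigBox d ℓ) η)

/-- The event `B` : the bootstrap percolation cluster of the origin contains a
site of `ℓ^∞`-norm at least `ℓ - 1`. -/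
def Bevent (k ℓ : ℕ) (η : Config d) : Prop :=
  ∃ x ∈ bpCluster k ℓ η, ∃ i, (ℓ : ℤ) - 1 ≤ |x i|

/-!
Empty the box row by row from the bottom. Suppose row `r` is empty and row `r + 1` has empty
sites in columns `a < a'`. Every exchange inside row `r + 1` is then allowed (each site has the
empty site below it as a witness), so the two holes can be slid to columns `1` and `ℓ`. Next,
columns `2, …, ℓ - 1` of rows `r` and `r + 1` are exchanged from left to right, each exchange
being allowed by the empty site to its left in row `r + 1` and the one to its right in row `r`.
Afterwards row `r + 1` is empty and row `r` still has its empty site in column `1`; after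
`ℓ - 1` stages the left column is empty, using at most `3ℓ` exchanges per stage.

The whole run is determined by the pairs `(a, a')`, at most `ℓ^{2(ℓ - 1)}` possibilities, and
since exchanges are invertible the configuration at any time together with the pairs determines
the initial one: the information loss is at most `2(ℓ - 1) log₂ ℓ`.
-/

section Exchanges

theorem swap_eq_comp (η : Config d) (x y : Site d) : swap η x y = η ∘ Equiv.swap x y := by
  funext z
  simp only [swap, Function.comp_apply, Equiv.swap_apply_def]
  split_ifs <;> rfl

theorem swap_apply_right (η : Config d) (x y : Site d) : swap η x y y = η x := by
  simp [swap_eq_comp]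

theorem swap_apply_of_ne (η : Config d) {x y z : Site d} (hx : z ≠ x) (hy : z ≠ y) :
    swap η x y z = η z := by
  simp [swap, hx, hy]

theorem swap_comm (η : Config d) (x y : Site d) : swap η x y = swap η y x := by
  rw [swap_eq_comp, swap_eq_comp, Equiv.swap_comm]

theorem swap_of_eq {η : Config d} {x y : Site d} (h : η x = η y) : swap η x y = η := by
  funext z
  by_cases hx : z = x <;> by_cases hy : z = y <;> simp_all [swap]

theorem swap_swap (η : Config d) (x y : Site d) : swap (swap η x y) x y = η := by
  funext z
  simp [swap_eq_comp]

theorem adj_comm {x y : Site d} : adj x y ↔ adj y x := by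
  simp only [adj, abs_sub_comm]

theorem constraint_two_of_empty {η : Config d} {x y u v : Site d}
    (hu : u ∈ neighbors x) (huy : u ≠ y) (hηu : η u = false)
    (hv : v ∈ neighbors y) (hvx : v ≠ x) (hηv : η v = false) : constraint 2 η x y :=
  ⟨Finset.card_pos.2 ⟨u, Finset.mem_filter.2 ⟨hu, huy, hηu⟩⟩,
    Finset.card_pos.2 ⟨v, Finset.mem_filter.2 ⟨hv, hvx, hηv⟩⟩⟩

def swapRun (η : Config d) (l : List (Site d × Site d)) : Config d :=
  l.foldl (fun ζ e => swap ζ e.1 e.2) η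

@[simp]
theorem swapRun_nil (η : Config d) : swapRun η [] = η := rfl

@[simp]
theorem swapRun_cons (η : Config d) (e : Site d × Site d) (l : List (Site d × Site d)) :
    swapRun η (e :: l) = swapRun (swap η e.1 e.2) l := rfl

@[simp]
theorem swapRun_append (η : Config d) (l₁ l₂ : List (Site d × Site d)) :
    swapRun η (l₁ ++ l₂) = swapRun (swapRun η l₁) l₂ :=
  List.foldl_append

theorem swapRun_concat (η : Config d) (l : List (Site d × Site d)) (e : Site d × Site d) :
    swapRun η (l ++ [e]) = swap (swapRun η l) e.1 e.2 := by
  simp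

theorem swapRun_swapRun_reverse (η : Config d) (l : List (Site d × Site d)) :
    swapRun (swapRun η l) l.reverse = η := by
  induction l generalizing η with
  | nil => rfl
  | cons e l ih => simp [ih, swap_swap]

theorem swapRun_apply_of_forall_ne (η : Config d) {l : List (Site d × Site d)} {z : Site d}
    (h : ∀ e ∈ l, z ≠ e.1 ∧ z ≠ e.2) : swapRun η l z = η z := by
  induction l generalizing η with
  | nil => rfl
  | cons e l ih =>
    rw [swapRun_cons, ih _ fun e' he' => h e' (List.mem_cons_of_mem _ he')]
    exact swap_apply_of_ne η (h e List.mem_cons_self).1 (h e List.mem_cons_self).2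

def slideSwaps (f : ℕ → Site d) (n : ℕ) : List (Site d × Site d) :=
  (List.range n).map fun j => (f j, f (j + 1))

theorem mem_slideSwaps {f : ℕ → Site d} {n : ℕ} {e : Site d × Site d} :
    e ∈ slideSwaps f n ↔ ∃ j < n, (f j, f (j + 1)) = e := by
  simp [slideSwaps]

theorem swapRun_slideSwaps (η : Config d) (f : ℕ → Site d) (n : ℕ) :
    swapRun η (slideSwaps f n) (f n) = η (f 0) := by
  induction n with
  | zero => rfl
  | succ n ih =>
    rw [slideSwaps, List.range_succ, List.map_append, List.map_singleton, swapRun_concat,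
      swap_apply_right, ← ih, slideSwaps]

def LegalSwap (k : ℕ) (V : Set (Site d)) (η : Config d) (e : Site d × Site d) : Prop :=
  adj e.1 e.2 ∧ e.1 ∈ V ∧ e.2 ∈ V ∧ constraint k η e.1 e.2

def LegalSwaps (k : ℕ) (V : Set (Site d)) : Config d → List (Site d × Site d) → Prop
  | _, [] => True
  | η, e :: l => LegalSwap k V η e ∧ LegalSwaps k V (swap η e.1 e.2) l

variable {k : ℕ} {V : Set (Site d)}

theorem legalSwaps_append {η : Config d} {l₁ l₂ : List (Site d × Site d)} :
    LegalSwaps k V η (l₁ ++ l₂) ↔ LegalSwaps k V η l₁ ∧ LegalSwaps k V (swapRun η l₁) l₂ := by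
  induction l₁ generalizing η with
  | nil => simp [LegalSwaps]
  | cons e l ih => simp [LegalSwaps, ih, and_assoc]

theorem legalSwaps_concat {η : Config d} {l : List (Site d × Site d)} {e : Site d × Site d} :
    LegalSwaps k V η (l ++ [e]) ↔ LegalSwaps k V η l ∧ LegalSwap k V (swapRun η l) e := by
  simp [legalSwaps_append, LegalSwaps]

theorem LegalSwaps.legalSwap_getElem {η : Config d} {l : List (Site d × Site d)}
    (h : LegalSwaps k V η l) {t : ℕ} (ht : t < l.length) :
    LegalSwap k V (swapRun η (l.take t)) l[t] := by
  rw [← List.take_append_drop t l, legalSwaps_append] at h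
  rw [← List.cons_getElem_drop_succ (h := ht)] at h
  exact h.2.1

theorem LegalSwaps.swapRun_apply_of_notMem {η : Config d} {l : List (Site d × Site d)}
    (h : LegalSwaps k V η l) {z : Site d} (hz : z ∉ V) : swapRun η l z = η z := by
  induction l generalizing η with
  | nil => rfl
  | cons e l ih =>
    rw [swapRun_cons, ih h.2]
    exact swap_apply_of_ne η (fun h' => hz (h' ▸ h.1.2.1)) (fun h' => hz (h' ▸ h.1.2.2.1))

theorem legalSwaps_of_invariant {Q : Config d → Prop} {η : Config d}
    {l : List (Site d × Site d)} (hη : Q η) (hlegal : ∀ e ∈ l, ∀ ζ, Q ζ → LegalSwap k V ζ e)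
    (hQ : ∀ e ∈ l, ∀ ζ, Q ζ → Q (swap ζ e.1 e.2)) : LegalSwaps k V η l := by
  induction l generalizing η with
  | nil => trivial
  | cons e l ih =>
    exact ⟨hlegal e List.mem_cons_self η hη,
      ih (hQ e List.mem_cons_self η hη) (fun e' he' => hlegal e' (List.mem_cons_of_mem _ he'))
        (fun e' he' => hQ e' (List.mem_cons_of_mem _ he'))⟩

/-- Exchanging two equal values leaves the marked particle in place, as `TStepMove.step`
requires. -/
def trackStep (s : Config d × Site d) (e : Site d × Site d) : Config d × Site d :=
  (swap s.1 e.1 e.2, if s.1 e.1 = s.1 e.2 then s.2 else Equiv.swap e.1 e.2 s.2)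

theorem foldl_trackStep_fst (l : List (Site d × Site d)) (s : Config d × Site d) :
    (l.foldl trackStep s).1 = swapRun s.1 l :=
  (List.foldl_hom Prod.fst fun _ _ => rfl).symm

theorem foldl_trackStep_apply_snd (l : List (Site d × Site d)) (s : Config d × Site d) :
    (l.foldl trackStep s).1 (l.foldl trackStep s).2 = s.1 s.2 := by
  induction l generalizing s with
  | nil => rfl
  | cons e l ih =>
    rw [List.foldl_cons, ih]
    obtain ⟨ζ, p⟩ := s
    by_cases h : ζ e.1 = ζ e.2
    · simp [trackStep, h, swap_of_eq h]
    · simp [trackStep, h, swap_eq_comp]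

theorem trackStep_cases {ζ : Config d} {p : Site d} {e : Site d × Site d}
    (he : LegalSwap k V ζ e) (hp : ζ p = true) :
    (swap ζ e.1 e.2 = ζ ∧ (trackStep (ζ, p) e).2 = p) ∨
      ∃ x y, adj x y ∧ x ∈ V ∧ y ∈ V ∧ ζ x = true ∧ ζ y = false ∧ constraint k ζ x y ∧
        swap ζ e.1 e.2 = swap ζ x y ∧ (trackStep (ζ, p) e).2 = if p = x then y else p := by
  obtain ⟨x, y⟩ := e
  obtain ⟨hadj, hx, hy, hc⟩ := he
  have hpos (q : Site d) (hq : ζ q = false) : p ≠ q := fun h => by simp [h, hq] at hp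
  rcases hζx : ζ x <;> rcases hζy : ζ y
  · exact .inl ⟨swap_of_eq (hζx.trans hζy.symm), by simp [trackStep, hζx, hζy]⟩
  · refine .inr ⟨y, x, adj_comm.1 hadj, hy, hx, hζy, hζx, hc.symm, swap_comm ζ x y, ?_⟩
    simp [trackStep, hζx, hζy, Equiv.swap_apply_def, hpos x hζx]
  · refine .inr ⟨x, y, hadj, hx, hy, hζx, hζy, hc, rfl, ?_⟩
    simp [trackStep, hζx, hζy, Equiv.swap_apply_def, hpos y hζy]
  · exact .inl ⟨swap_of_eq (hζx.trans hζy.symm), by simp [trackStep, hζx, hζy]⟩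

end Exchanges

section SwapPlans

variable {k : ℕ} {M : Set (Config d)} {V : Set (Site d)}

def TStepMove.ofSwapPlan (plan : Config d → List (Site d × Site d))
    (hplan : ∀ η ∈ M, LegalSwaps k V η (plan η)) (T : ℕ) : TStepMove d k M V T where
  conf η t := swapRun η ((plan η).take t)
  pos η z t := (((plan η).take t).foldl trackStep (η, z)).2
  conf_zero _ _ := rfl
  pos_zero _ _ _ _ := rfl
  step η hη z hz t _ := by
    by_cases ht : t < (plan η).length
    · have hs : ((plan η).take t).foldl trackStep (η, z) =
          (swapRun η ((plan η).take t), (((plan η).take t).foldl trackStep (η, z)).2) :=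
        Prod.ext (foldl_trackStep_fst _ _) rfl
      have hocc := foldl_trackStep_apply_snd ((plan η).take t) (η, z)
      rw [hs] at hocc
      rw [List.take_succ_eq_append_getElem ht, swapRun_concat, List.foldl_append, hs]
      exact trackStep_cases ((hplan η hη).legalSwap_getElem ht) (hocc.trans hz)
    · rw [List.take_of_length_le (by omega), List.take_of_length_le (by omega)]
      exact .inl ⟨rfl, rfl⟩

variable {plan : Config d → List (Site d × Site d)} {hplan : ∀ η ∈ M, LegalSwaps k V η (plan η)}

theorem TStepMove.ofSwapPlan_conf_of_length_le {T : ℕ} {η : Config d}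
    (h : (plan η).length ≤ T) : (ofSwapPlan plan hplan T).conf η T = swapRun η (plan η) :=
  congrArg _ (List.take_of_length_le h)

/-- Exchanges are invertible, so the configuration at time `t` and the plan determine the
initial configuration. -/
theorem TStepMove.lossBoundedBy_ofSwapPlan {T : ℕ} (P : Finset (List (Site d × Site d)))
    (hP : ∀ η ∈ M, plan η ∈ P) {K : ℝ} (hK : (P.card : ℝ) ≤ 2 ^ K) :
    LossBoundedBy (ofSwapPlan plan hplan T) K := by
  intro t _ η' _
  refine ⟨P.image fun p => swapRun ((ofSwapPlan plan hplan T).conf η' t) (p.take t).reverse,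
    ?_, (Nat.cast_le.2 Finset.card_image_le).trans hK⟩
  rintro η ⟨hη, hconf, -⟩
  refine Finset.mem_coe.2 (Finset.mem_image.2 ⟨plan η, hP η hη, ?_⟩)
  rw [← hconf]
  exact swapRun_swapRun_reverse η _

end SwapPlans

section Box

/-- The site in column `c` and row `r` of the box `b + [ℓ]²` (for `1 ≤ c, r ≤ ℓ`). -/
def pt (b : Site 2) (c r : ℕ) : Site 2 := ![b 0 + c, b 1 + r]

variable {b : Site 2} {ℓ : ℕ}

@[simp]
theorem pt_zero (c r : ℕ) : pt b c r 0 = b 0 + c := rfl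

@[simp]
theorem pt_one (c r : ℕ) : pt b c r 1 = b 1 + r := rfl

theorem pt_eq_pt_iff {c r c' r' : ℕ} : pt b c r = pt b c' r' ↔ c = c' ∧ r = r' := by
  refine ⟨fun h => ?_, by rintro ⟨rfl, rfl⟩; rfl⟩
  have h0 := congrFun h 0
  have h1 := congrFun h 1
  simp only [pt_zero, pt_one] at h0 h1
  omega

theorem pt_ne_pt {c r c' r' : ℕ} (h : c ≠ c' ∨ r ≠ r') : pt b c r ≠ pt b c' r' := by
  rw [Ne, pt_eq_pt_iff]
  omega

theorem pt_mem_box2 {c r : ℕ} : pt b c r ∈ box2 b ℓ ↔ 1 ≤ c ∧ c ≤ ℓ ∧ 1 ≤ r ∧ r ≤ ℓ := by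
  simp only [box2, genBox, corner, Set.mem_ofPred_eq, Fin.forall_fin_two, Finset.mem_univ,
    not_true_eq_false, forall_const, IsEmpty.forall_iff, and_true, pt_zero, pt_one]
  omega

theorem exists_pt_of_mem_box2 {z : Site 2} (hz : z ∈ box2 b ℓ) :
    ∃ c r, z = pt b c r ∧ 1 ≤ c ∧ c ≤ ℓ ∧ 1 ≤ r ∧ r ≤ ℓ := by
  have h0 := (hz 0).1 (Finset.mem_univ 0)
  have h1 := (hz 1).1 (Finset.mem_univ 1)
  simp only [corner] at h0 h1
  refine ⟨(z 0 - b 0).toNat, (z 1 - b 1).toNat, ?_, by omega, by omega, by omega, by omega⟩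
  funext i
  fin_cases i <;> simp [pt] <;> omega

theorem adj_pt_iff {c r c' r' : ℕ} :
    adj (pt b c r) (pt b c' r') ↔
      (c' = c + 1 ∨ c = c' + 1) ∧ r = r' ∨ c = c' ∧ (r' = r + 1 ∨ r = r' + 1) := by
  simp only [adj, Fin.sum_univ_two, pt_zero, pt_one, add_sub_add_left_eq_sub]
  rcases abs_cases ((c : ℤ) - c') with ⟨h, _⟩ | ⟨h, _⟩ <;>
    rcases abs_cases ((r : ℤ) - r') with ⟨h', _⟩ | ⟨h', _⟩ <;> rw [h, h'] <;> omega

theorem mem_neighbors_of_adj {x y : Site 2} (h : adj x y) : y ∈ neighbors x := by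
  simp only [adj, Fin.sum_univ_two] at h
  simp only [neighbors, Finset.mem_image, Finset.mem_univ, true_and, Prod.exists]
  have key : (y 0 = x 0 + 1 ∨ y 0 = x 0 + -1) ∧ y 1 = x 1 ∨
      y 0 = x 0 ∧ (y 1 = x 1 + 1 ∨ y 1 = x 1 + -1) := by
    rcases abs_cases (x 0 - y 0) with ⟨h0, _⟩ | ⟨h0, _⟩ <;>
      rcases abs_cases (x 1 - y 1) with ⟨h1, _⟩ | ⟨h1, _⟩ <;> omega
  rcases key with ⟨h0 | h0, h1⟩ | ⟨h0, h1 | h1⟩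
  · exact ⟨0, true, by funext i; fin_cases i <;> simp [h0, h1]⟩
  · exact ⟨0, false, by funext i; fin_cases i <;> simp [h0, h1]⟩
  · exact ⟨1, true, by funext i; fin_cases i <;> simp [h0, h1]⟩
  · exact ⟨1, false, by funext i; fin_cases i <;> simp [h0, h1]⟩

theorem legalSwap_two_of_empty {V : Set (Site 2)} {ζ : Config 2} {x y u v : Site 2}
    (hxy : adj x y) (hx : x ∈ V) (hy : y ∈ V)
    (hu : adj x u) (huy : u ≠ y) (hζu : ζ u = false)
    (hv : adj y v) (hvx : v ≠ x) (hζv : ζ v = false) : LegalSwap 2 V ζ (x, y) :=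
  ⟨hxy, hx, hy, constraint_two_of_empty (mem_neighbors_of_adj hu) huy hζu
    (mem_neighbors_of_adj hv) hvx hζv⟩

def RowEmpty (b : Site 2) (ℓ : ℕ) (ζ : Config 2) (r : ℕ) : Prop :=
  ∀ c, 1 ≤ c → c ≤ ℓ → ζ (pt b c r) = false

def HolePair (b : Site 2) (ℓ : ℕ) (ζ : Config 2) (r : ℕ) (p : ℕ × ℕ) : Prop :=
  1 ≤ p.1 ∧ p.1 < p.2 ∧ p.2 ≤ ℓ ∧ ζ (pt b p.1 r) = false ∧ ζ (pt b p.2 r) = false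

theorem HolePair.congr {ζ ζ' : Config 2} {r : ℕ} {p : ℕ × ℕ} (h : HolePair b ℓ ζ r p)
    (hζ : ∀ c, ζ' (pt b c r) = ζ (pt b c r)) : HolePair b ℓ ζ' r p := by
  simpa only [HolePair, hζ] using h

/-- Over an empty row, every exchange in the row above is allowed. -/
theorem legalSwaps_slideSwaps {ζ : Config 2} {r n : ℕ} {f : ℕ → ℕ} (hrℓ : r + 1 ≤ ℓ)
    (hrow : RowEmpty b ℓ ζ r)
    (hf : ∀ j < n, 1 ≤ f j ∧ f j ≤ ℓ ∧ 1 ≤ f (j + 1) ∧ f (j + 1) ≤ ℓ ∧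
      (f (j + 1) = f j + 1 ∨ f j = f (j + 1) + 1)) :
    LegalSwaps 2 (box2 b ℓ) ζ (slideSwaps (fun j => pt b (f j) (r + 1)) n) ∧
      RowEmpty b ℓ (swapRun ζ (slideSwaps (fun j => pt b (f j) (r + 1)) n)) r := by
  have hoff : ∀ e ∈ slideSwaps (fun j => pt b (f j) (r + 1)) n, ∀ c,
      pt b c r ≠ e.1 ∧ pt b c r ≠ e.2 := by
    rintro _ he c
    obtain ⟨j, -, rfl⟩ := mem_slideSwaps.1 he
    exact ⟨pt_ne_pt (by omega), pt_ne_pt (by omega)⟩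
  refine ⟨legalSwaps_of_invariant (Q := fun ζ => RowEmpty b ℓ ζ r) hrow ?_ ?_,
    fun c hc hcℓ => (swapRun_apply_of_forall_ne ζ fun e he => hoff e he c).trans
      (hrow c hc hcℓ)⟩
  · rintro _ he ζ' hrow'
    obtain ⟨j, hj, rfl⟩ := mem_slideSwaps.1 he
    have := hf j hj
    refine legalSwap_two_of_empty (u := pt b (f j) r) (v := pt b (f (j + 1)) r)
      (adj_pt_iff.2 (by omega)) (pt_mem_box2.2 (by omega)) (pt_mem_box2.2 (by omega))
      (adj_pt_iff.2 (by omega)) (pt_ne_pt (by omega))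
      (hrow' _ (by omega) (by omega))
      (adj_pt_iff.2 (by omega)) (pt_ne_pt (by omega))
      (hrow' _ (by omega) (by omega))
  · intro e he ζ' hrow' c hc hcℓ
    rw [swap_apply_of_ne _ (hoff e he c).1 (hoff e he c).2]
    exact hrow' c hc hcℓ

def slidePlan (b : Site 2) (ℓ r : ℕ) (h : ℕ × ℕ) : List (Site 2 × Site 2) :=
  slideSwaps (fun j => pt b (h.1 - j) (r + 1)) (h.1 - 1) ++
    slideSwaps (fun j => pt b (h.2 + j) (r + 1)) (ℓ - h.2)

theorem slidePlan_spec {ζ : Config 2} {r : ℕ} {h : ℕ × ℕ} (hrℓ : r + 1 ≤ ℓ)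
    (hrow : RowEmpty b ℓ ζ r) (hh : HolePair b ℓ ζ (r + 1) h) :
    LegalSwaps 2 (box2 b ℓ) ζ (slidePlan b ℓ r h) ∧ RowEmpty b ℓ (swapRun ζ (slidePlan b ℓ r h)) r ∧
      swapRun ζ (slidePlan b ℓ r h) (pt b 1 (r + 1)) = false ∧
      swapRun ζ (slidePlan b ℓ r h) (pt b ℓ (r + 1)) = false := by
  obtain ⟨a, a'⟩ := h
  obtain ⟨ha, haa', ha'ℓ, hζa, hζa'⟩ := hh
  simp only [slidePlan, swapRun_append, legalSwaps_append]
  obtain ⟨hleft, hrow₁⟩ := legalSwaps_slideSwaps (f := fun j => a - j) (n := a - 1) hrℓ hrow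
    (fun j hj => by omega)
  set ζ₁ := swapRun ζ (slideSwaps (fun j => pt b (a - j) (r + 1)) (a - 1))
  obtain ⟨hright, hrow₂⟩ := legalSwaps_slideSwaps (f := fun j => a' + j) (n := ℓ - a') hrℓ hrow₁
    (fun j hj => by omega)
  have h1₁ : ζ₁ (pt b 1 (r + 1)) = false := by
    have := swapRun_slideSwaps ζ (fun j => pt b (a - j) (r + 1)) (a - 1)
    beta_reduce at this
    rwa [show a - (a - 1) = 1 by omega, Nat.sub_zero, hζa] at this
  have ha'₁ : ζ₁ (pt b a' (r + 1)) = false := by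
    refine (swapRun_apply_of_forall_ne ζ fun e he => ?_).trans hζa'
    obtain ⟨j, hj, rfl⟩ := mem_slideSwaps.1 he
    exact ⟨pt_ne_pt (by omega), pt_ne_pt (by omega)⟩
  refine ⟨⟨hleft, hright⟩, hrow₂, ?_, ?_⟩
  · refine (swapRun_apply_of_forall_ne ζ₁ fun e he => ?_).trans h1₁
    obtain ⟨j, hj, rfl⟩ := mem_slideSwaps.1 he
    exact ⟨pt_ne_pt (by omega), pt_ne_pt (by omega)⟩
  · have := swapRun_slideSwaps ζ₁ (fun j => pt b (a' + j) (r + 1)) (ℓ - a')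
    beta_reduce at this
    rwa [show a' + (ℓ - a') = ℓ by omega, add_zero, ha'₁] at this

def liftSwaps (b : Site 2) (r n : ℕ) : List (Site 2 × Site 2) :=
  (List.range n).map fun j => (pt b (j + 2) r, pt b (j + 2) (r + 1))

theorem mem_liftSwaps {r n : ℕ} {e : Site 2 × Site 2} :
    e ∈ liftSwaps b r n ↔ ∃ j < n, (pt b (j + 2) r, pt b (j + 2) (r + 1)) = e := by
  simp [liftSwaps]

/-- Each exchange is allowed by the empty site to its left in row `r + 1` and the one to its
right in row `r`. -/
theorem liftSwaps_spec {ζ : Config 2} {r : ℕ} (hr : 1 ≤ r) (hrℓ : r + 1 ≤ ℓ)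
    (hrow : RowEmpty b ℓ ζ r) (h1 : ζ (pt b 1 (r + 1)) = false) :
    ∀ n, n + 2 ≤ ℓ → LegalSwaps 2 (box2 b ℓ) ζ (liftSwaps b r n) ∧
      (∀ c, 1 ≤ c → c ≤ n + 1 → swapRun ζ (liftSwaps b r n) (pt b c (r + 1)) = false) ∧
      ∀ c, n + 2 ≤ c → c ≤ ℓ → swapRun ζ (liftSwaps b r n) (pt b c r) = false
  | 0, _ => ⟨trivial, fun c hc hc1 => (show c = 1 by omega) ▸ h1,
      fun c hc hcℓ => hrow c (by omega) hcℓ⟩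
  | n + 1, hn => by
    obtain ⟨hlegal, htop, hbot⟩ := liftSwaps_spec hr hrℓ hrow h1 n (by omega)
    rw [liftSwaps, List.range_succ, List.map_append, List.map_singleton, ← liftSwaps,
      legalSwaps_concat, swapRun_concat]
    refine ⟨⟨hlegal, legalSwap_two_of_empty (u := pt b (n + 3) r) (v := pt b (n + 1) (r + 1))
      (adj_pt_iff.2 (by omega)) (pt_mem_box2.2 (by omega)) (pt_mem_box2.2 (by omega))
      (adj_pt_iff.2 (by omega)) (pt_ne_pt (by omega))
      (hbot _ (by omega) (by omega))
      (adj_pt_iff.2 (by omega)) (pt_ne_pt (by omega))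
      (htop _ (by omega) le_rfl)⟩, fun c hc hcn => ?_, fun c hc hcℓ => ?_⟩
    · rcases (show c = n + 2 ∨ c ≤ n + 1 by omega) with rfl | hc'
      · rw [swap_apply_right]
        exact hbot _ le_rfl (by omega)
      · rw [swap_apply_of_ne _ (pt_ne_pt (by omega)) (pt_ne_pt (by omega))]
        exact htop c hc hc'
    · rw [swap_apply_of_ne _ (pt_ne_pt (by omega)) (pt_ne_pt (by omega))]
      exact hbot c (by omega) hcℓ

def stagePlan (b : Site 2) (ℓ r : ℕ) (h : ℕ × ℕ) : List (Site 2 × Site 2) :=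
  slidePlan b ℓ r h ++ liftSwaps b r (ℓ - 2)

theorem length_stagePlan (r : ℕ) (h : ℕ × ℕ) :
    (stagePlan b ℓ r h).length = h.1 - 1 + (ℓ - h.2) + (ℓ - 2) := by
  simp [stagePlan, slidePlan, slideSwaps, liftSwaps, add_assoc]

theorem stagePlan_spec {ζ : Config 2} {r : ℕ} {h : ℕ × ℕ} (hr : 1 ≤ r) (hrℓ : r + 1 ≤ ℓ)
    (hrow : RowEmpty b ℓ ζ r) (hh : HolePair b ℓ ζ (r + 1) h) :
    LegalSwaps 2 (box2 b ℓ) ζ (stagePlan b ℓ r h) ∧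
      RowEmpty b ℓ (swapRun ζ (stagePlan b ℓ r h)) (r + 1) ∧
      swapRun ζ (stagePlan b ℓ r h) (pt b 1 r) = false := by
  obtain ⟨hslide, hrow₁, h1, hℓ⟩ := slidePlan_spec hrℓ hrow hh
  obtain ⟨hlift, htop, -⟩ := liftSwaps_spec hr hrℓ hrow₁ h1 (ℓ - 2) (by omega)
  have hoff : ∀ c s, (c = 1 ∨ c = ℓ) → ∀ e ∈ liftSwaps b r (ℓ - 2),
      pt b c s ≠ e.1 ∧ pt b c s ≠ e.2 := by
    rintro c s hc _ he
    obtain ⟨j, hj, rfl⟩ := mem_liftSwaps.1 he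
    exact ⟨pt_ne_pt (by omega), pt_ne_pt (by omega)⟩
  simp only [stagePlan, legalSwaps_append, swapRun_append]
  refine ⟨⟨hslide, hlift⟩, fun c hc hcℓ => ?_,
    (swapRun_apply_of_forall_ne _ (hoff 1 r (.inl rfl))).trans (hrow₁ 1 le_rfl (by omega))⟩
  rcases (show c ≤ ℓ - 1 ∨ c = ℓ by omega) with hc' | rfl
  · exact htop c hc (by omega)
  · exact (swapRun_apply_of_forall_ne _ (hoff _ _ (.inr rfl))).trans hℓ

theorem swapRun_stagePlan_of_ne {ζ : Config 2} {r c s : ℕ} {h : ℕ × ℕ} (hs : s ≠ r)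
    (hs' : s ≠ r + 1) : swapRun ζ (stagePlan b ℓ r h) (pt b c s) = ζ (pt b c s) := by
  refine swapRun_apply_of_forall_ne ζ fun e he => ?_
  simp only [stagePlan, slidePlan, List.mem_append, mem_slideSwaps, mem_liftSwaps] at he
  rcases he with (⟨j, -, rfl⟩ | ⟨j, -, rfl⟩) | ⟨j, -, rfl⟩ <;>
    exact ⟨pt_ne_pt (by omega), pt_ne_pt (by omega)⟩

def framePlan (b : Site 2) (ℓ : ℕ) : ℕ → List (ℕ × ℕ) → List (Site 2 × Site 2)
  | _, [] => []
  | r, h :: hs => stagePlan b ℓ r h ++ framePlan b ℓ (r + 1) hs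

theorem swapRun_framePlan_of_lt {c s : ℕ} :
    ∀ {r : ℕ} (hs : List (ℕ × ℕ)) {ζ : Config 2}, s < r →
      swapRun ζ (framePlan b ℓ r hs) (pt b c s) = ζ (pt b c s)
  | _, [], _, _ => rfl
  | r, h :: hs, ζ, hs_lt => by
    rw [framePlan, swapRun_append, swapRun_framePlan_of_lt hs (by omega),
      swapRun_stagePlan_of_ne (by omega) (by omega)]

theorem length_framePlan_le :
    ∀ {r : ℕ} (hs : List (ℕ × ℕ)), (∀ h ∈ hs, h.1 ≤ ℓ) →
      (framePlan b ℓ r hs).length ≤ 3 * ℓ * hs.length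
  | _, [], _ => Nat.zero_le _
  | r, h :: hs, hle => by
    have := length_framePlan_le (r := r + 1) hs fun h' h'' => hle h' (List.mem_cons_of_mem _ h'')
    have := hle h List.mem_cons_self
    rw [framePlan, List.length_append, length_stagePlan, List.length_cons, Nat.mul_succ]
    omega

theorem framePlan_spec :
    ∀ (hs : List (ℕ × ℕ)) {r : ℕ} {ζ : Config 2}, 1 ≤ r → r + hs.length ≤ ℓ →
      RowEmpty b ℓ ζ r → (∀ i (hi : i < hs.length), HolePair b ℓ ζ (r + 1 + i) hs[i]) →
      LegalSwaps 2 (box2 b ℓ) ζ (framePlan b ℓ r hs) ∧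
        RowEmpty b ℓ (swapRun ζ (framePlan b ℓ r hs)) (r + hs.length) ∧
        ∀ s, r ≤ s → s < r + hs.length → swapRun ζ (framePlan b ℓ r hs) (pt b 1 s) = false
  | [], _, _, _, _, hrow, _ => ⟨trivial, hrow, fun _ h h' => by rw [List.length_nil] at h'; omega⟩
  | h :: hs, r, ζ, hr, hlen, hrow, hholes => by
    simp only [List.length_cons] at hlen hholes
    obtain ⟨hstage, hrow₁, h1₁⟩ := stagePlan_spec hr (by omega) hrow (hholes 0 (by omega))
    obtain ⟨hrest, hrow', hcol'⟩ := framePlan_spec hs (r := r + 1) (by omega) (by omega) hrow₁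
      fun i hi => by
        have := hholes (i + 1) (by omega)
        rw [show r + 1 + (i + 1) = r + 1 + 1 + i by omega, List.getElem_cons_succ] at this
        exact this.congr fun c => swapRun_stagePlan_of_ne (by omega) (by omega)
    simp only [framePlan, legalSwaps_append, swapRun_append, List.length_cons]
    refine ⟨⟨hstage, hrest⟩, by rwa [show r + (hs.length + 1) = r + 1 + hs.length by omega],
      fun s hrs hsr => ?_⟩
    rcases (show s = r ∨ r + 1 ≤ s by omega) with rfl | hrs
    · exact (swapRun_framePlan_of_lt hs (by omega)).trans h1₁
    · exact hcol' s hrs (by omega)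

end Box

section Framing

variable {b : Site 2} {ℓ : ℕ} {η : Config 2}

def rowHoleCols (b : Site 2) (ℓ : ℕ) (η : Config 2) (s : ℕ) : Finset ℕ :=
  (Finset.Icc 1 ℓ).filter fun c => η (pt b c s) = false

def rowHoles (b : Site 2) (ℓ : ℕ) (η : Config 2) (s : ℕ) : ℕ × ℕ :=
  if h : (rowHoleCols b ℓ η s).Nonempty then
    ((rowHoleCols b ℓ η s).min' h, (rowHoleCols b ℓ η s).max' h)
  else (0, 0)

theorem holePair_rowHoles {s : ℕ} (h : TwoEmptyIn {z | z ∈ box2 b ℓ ∧ z 1 = b 1 + s} η) :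
    HolePair b ℓ η s (rowHoles b ℓ η s) := by
  obtain ⟨z, ⟨hz, hzs⟩, z', ⟨hz', hz's⟩, hne, hηz, hηz'⟩ := h
  obtain ⟨c, r, rfl, hc, hcℓ, -, -⟩ := exists_pt_of_mem_box2 hz
  obtain ⟨c', r', rfl, hc', hc'ℓ, -, -⟩ := exists_pt_of_mem_box2 hz'
  simp only [pt_one] at hzs hz's
  rw [show r = s by omega] at hηz hne
  rw [show r' = s by omega] at hηz' hne
  have hmem {c : ℕ} (h1 : 1 ≤ c) (h2 : c ≤ ℓ) (h3 : η (pt b c s) = false) :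
      c ∈ rowHoleCols b ℓ η s :=
    Finset.mem_filter.2 ⟨Finset.mem_Icc.2 ⟨h1, h2⟩, h3⟩
  have hne' : (rowHoleCols b ℓ η s).Nonempty := ⟨c, hmem hc hcℓ hηz⟩
  have hmin := Finset.mem_filter.1 ((rowHoleCols b ℓ η s).min'_mem hne')
  have hmax := Finset.mem_filter.1 ((rowHoleCols b ℓ η s).max'_mem hne')
  rw [Finset.mem_Icc] at hmin hmax
  rw [rowHoles, dif_pos hne']
  exact ⟨hmin.1.1, Finset.min'_lt_max' _ (hmem hc hcℓ hηz) (hmem hc' hc'ℓ hηz')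
    (fun h => hne (by rw [h])), hmax.1.2, hmin.2, hmax.2⟩

/-- Stage `r` uses the extreme holes of row `r + 1` in `η`, which no earlier stage touches. -/
def framingPlan (b : Site 2) (ℓ : ℕ) (η : Config 2) : List (Site 2 × Site 2) :=
  framePlan b ℓ 1 (List.ofFn fun i : Fin (ℓ - 1) => rowHoles b ℓ η (i + 2))

def framingPlans (b : Site 2) (ℓ : ℕ) : Finset (List (Site 2 × Site 2)) :=
  (Fintype.piFinset fun _ : Fin (ℓ - 1) => Finset.Icc 1 ℓ ×ˢ Finset.Icc 1 ℓ).image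
    fun g => framePlan b ℓ 1 (List.ofFn g)

theorem holePair_rowHoles_add_two
    (hrows : ∀ s : ℕ, 2 ≤ s → s ≤ ℓ → TwoEmptyIn {z | z ∈ box2 b ℓ ∧ z 1 = b 1 + s} η)
    (i : Fin (ℓ - 1)) :
    HolePair b ℓ η (i + 2) (rowHoles b ℓ η (i + 2)) :=
  holePair_rowHoles (hrows _ (by omega) (by omega))

theorem framingPlan_spec
    (hrows : ∀ s : ℕ, 2 ≤ s → s ≤ ℓ → TwoEmptyIn {z | z ∈ box2 b ℓ ∧ z 1 = b 1 + s} η)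
    (hℓ : 1 ≤ ℓ) (hbot : ∀ z ∈ box2 b ℓ, z 1 = b 1 + 1 → η z = false) :
    LegalSwaps 2 (box2 b ℓ) η (framingPlan b ℓ η) ∧
      ∀ z ∈ box2 b ℓ, z 0 = b 0 + 1 → swapRun η (framingPlan b ℓ η) z = false := by
  obtain ⟨hlegal, htop, hcol⟩ := framePlan_spec (b := b) (ℓ := ℓ) (r := 1) (ζ := η)
    (List.ofFn fun i : Fin (ℓ - 1) => rowHoles b ℓ η (i + 2)) le_rfl (by simp; omega)
    (fun c hc hcℓ => hbot _ (pt_mem_box2.2 ⟨hc, hcℓ, le_rfl, hℓ⟩) (by simp))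
    (fun i hi => by
      rw [List.getElem_ofFn, show 1 + 1 + i = i + 2 by omega]
      exact holePair_rowHoles_add_two hrows _)
  refine ⟨hlegal, fun z hz hz0 => ?_⟩
  obtain ⟨c, s, rfl, -, -, hs, hsℓ⟩ := exists_pt_of_mem_box2 hz
  obtain rfl : c = 1 := by simpa using hz0
  rw [List.length_ofFn] at htop hcol
  rcases (show s < ℓ ∨ s = ℓ by omega) with hs' | rfl
  · exact hcol s hs (by omega)
  · simpa [framingPlan, show 1 + (s - 1) = s by omega] using htop 1 le_rfl hℓ

theorem framingPlan_mem_framingPlans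
    (hrows : ∀ s : ℕ, 2 ≤ s → s ≤ ℓ → TwoEmptyIn {z | z ∈ box2 b ℓ ∧ z 1 = b 1 + s} η) :
    framingPlan b ℓ η ∈ framingPlans b ℓ := by
  refine Finset.mem_image.2 ⟨_, Fintype.mem_piFinset.2 fun i => ?_, rfl⟩
  obtain ⟨h1, h12, h2, -⟩ := holePair_rowHoles_add_two hrows i
  simp only [Finset.mem_product, Finset.mem_Icc]
  omega

theorem length_framingPlan_le
    (hrows : ∀ s : ℕ, 2 ≤ s → s ≤ ℓ → TwoEmptyIn {z | z ∈ box2 b ℓ ∧ z 1 = b 1 + s} η) :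
    (framingPlan b ℓ η).length ≤ 3 * ℓ * ℓ := by
  refine (length_framePlan_le _ fun h hh => ?_).trans ?_
  · obtain ⟨i, rfl⟩ := List.mem_ofFn.1 hh
    exact (holePair_rowHoles_add_two hrows i).2.1.le.trans (holePair_rowHoles_add_two hrows i).2.2.1
  · rw [List.length_ofFn]
    exact Nat.mul_le_mul_left _ (Nat.sub_le ℓ 1)

theorem card_framingPlans_le (hℓ : 1 ≤ ℓ) :
    ((framingPlans b ℓ).card : ℝ) ≤ 2 ^ (3 * ℓ * Real.logb 2 ℓ) := by
  have hcard : (framingPlans b ℓ).card ≤ ℓ ^ (3 * ℓ) :=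
    calc (framingPlans b ℓ).card
        ≤ (Fintype.piFinset fun _ : Fin (ℓ - 1) => Finset.Icc 1 ℓ ×ˢ Finset.Icc 1 ℓ).card :=
          Finset.card_image_le
      _ = (ℓ ^ 2) ^ (ℓ - 1) := by simp [Fintype.card_piFinset, sq]
      _ ≤ ℓ ^ (3 * ℓ) := by
          rw [← pow_mul]
          exact Nat.pow_le_pow_right hℓ (by omega)
  calc ((framingPlans b ℓ).card : ℝ) ≤ (ℓ : ℝ) ^ (3 * ℓ) := by exact_mod_cast hcard
    _ = 2 ^ (3 * ℓ * Real.logb 2 ℓ) := by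
      rw [show 3 * ℓ * Real.logb 2 ℓ = Real.logb 2 ℓ * (3 * ℓ : ℕ) by push_cast; ring,
        Real.rpow_mul (by norm_num), Real.rpow_logb (by norm_num) (by norm_num) (by positivity),
        Real.rpow_natCast]

end Framing

/-- (Framing move, `k = d = 2`.) If the box `b + [ℓ]²` is
`(2,2)`-good and its bottom row is empty, a `T`-step move empties its left
column, with `T ≤ C ℓ²` and `Loss ≤ C ℓ log₂ ℓ`. -/
theorem statement9 :
    ∃ C : ℝ, 0 < C ∧
      ∀ ℓ : ℕ, 2 ≤ ℓ → ∀ b : Site 2,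
        ∃ T : ℕ,
          ∃ mv : TStepMove 2 2
            {η | Good22 b ℓ η ∧ ∀ z ∈ box2 b ℓ, z 1 = b 1 + 1 → η z = false}
            (box2 b ℓ) T,
            (T : ℝ) ≤ C * (ℓ : ℝ) ^ 2 ∧
            LossBoundedBy mv (C * ℓ * Real.logb 2 ℓ) ∧
            ∀ η : Config 2,
              (Good22 b ℓ η ∧ ∀ z ∈ box2 b ℓ, z 1 = b 1 + 1 → η z = false) →
              (∀ z ∈ box2 b ℓ, z 0 = b 0 + 1 → mv.conf η T z = false) ∧
              (∀ z ∉ box2 b ℓ, mv.conf η T z = η z) := by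
  refine ⟨3, by norm_num, fun ℓ hℓ b => ?_⟩
  have hrows (η : Config 2) (hη : Good22 b ℓ η) (s : ℕ) (hs : 2 ≤ s) :=
    hη.1.1 s (by omega : 1 ≤ s)
  have hspec (η : Config 2)
      (hη : η ∈ {η | Good22 b ℓ η ∧ ∀ z ∈ box2 b ℓ, z 1 = b 1 + 1 → η z = false}) :=
    framingPlan_spec (hrows η hη.1) (by omega) hη.2
  refine ⟨3 * ℓ * ℓ, TStepMove.ofSwapPlan (framingPlan b ℓ) (fun η hη => (hspec η hη).1) _,
    le_of_eq (by push_cast; ring),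
    TStepMove.lossBoundedBy_ofSwapPlan _ (fun η hη => framingPlan_mem_framingPlans (hrows η hη.1))
      (card_framingPlans_le (by omega)), fun η hη => ?_⟩
  rw [TStepMove.ofSwapPlan_conf_of_length_le (length_framingPlan_le (hrows η hη.1))]
  exact ⟨(hspec η hη).2, fun z hz => (hspec η hη).1.swapRun_apply_of_notMem hz⟩

end KA
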